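/- arXiv:2208.02627 — 2 statements merged into one kernel-verified Lean document; each statement's English description precedes it below -/
import Mathlib

section
/- Let A and B be independent nonnegative random variables on a probability space with B integrable and E[B] ≤ 1. Then E[min(1, AB)] ≤ E[min(1, A)]. -/
/-!
For fixed `a`, the map `b ↦ min 1 (a * b)` is concave, and `b ↦ min 1 a + s a * (b - 1)` with
`s a = a` for `a ≤ 1`, `s a = 0` otherwise, is a supporting line of it at `b = 1`. Evaluating the
supporting-line bound at `(A, B)` and taking expectations, independence factors the error term as
`E[s(A)] * (E[B] - 1) ≤ 0`.
-/

open MeasureTheory ProbabilityTheory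

lemma min_one_mul_le_add_indicator_mul_sub_one (a b : ℝ) :
    min 1 (a * b) ≤ min 1 a + (Set.Iic 1).indicator id a * (b - 1) := by
  by_cases ha : a ≤ 1
  · simp only [min_eq_right ha, Set.indicator_of_mem (Set.mem_Iic.2 ha), id]
    linarith [min_le_right 1 (a * b)]
  · simp only [min_eq_left (not_le.1 ha).le, Set.indicator_of_notMem (mt Set.mem_Iic.1 ha),
      zero_mul, add_zero]
    exact min_le_left _ _

lemma indicator_Iic_one_id_mem_Icc {a : ℝ} (ha : 0 ≤ a) :
    (Set.Iic 1).indicator id a ∈ Set.Icc (0 : ℝ) 1 := by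
  by_cases ha1 : a ≤ 1
  · simpa [Set.indicator_of_mem (Set.mem_Iic.2 ha1)] using ⟨ha, ha1⟩
  · simp [Set.indicator_of_notMem (mt Set.mem_Iic.1 ha1)]

section Probability

variable {Ω : Type*} [MeasurableSpace Ω] {μ : Measure Ω}

lemma integrable_min_one_of_nonneg [IsFiniteMeasure μ] {f : Ω → ℝ}
    (hf : AEMeasurable f μ) (hf0 : ∀ ω, 0 ≤ f ω) : Integrable (fun ω => min 1 (f ω)) μ :=
  .of_mem_Icc 0 1 (aemeasurable_const.min hf) <| .of_forall fun ω =>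
    ⟨le_min zero_le_one (hf0 ω), min_le_left _ _⟩

lemma integral_mul_sub_one_nonpos_of_indepFun [IsProbabilityMeasure μ] {X Y : Ω → ℝ}
    (hXY : IndepFun X Y μ) (hX : AEStronglyMeasurable X μ) (hX0 : ∀ ω, 0 ≤ X ω)
    (hY : Integrable Y μ) (hEY : ∫ ω, Y ω ∂μ ≤ 1) :
    ∫ ω, X ω * (Y ω - 1) ∂μ ≤ 0 := by
  have hXY' : IndepFun X (fun ω => Y ω - 1) μ :=
    hXY.comp measurable_id (measurable_id.sub measurable_const)
  rw [hXY'.integral_fun_mul_eq_mul_integral hX (hY.sub (integrable_const 1)).aestronglyMeasurable,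
    integral_sub hY (integrable_const 1), integral_const, probReal_univ, one_smul]
  exact mul_nonpos_of_nonneg_of_nonpos (integral_nonneg hX0) (sub_nonpos.2 hEY)

end Probability

theorem expectation_min_one_mul_le_of_expectation_le_one_general
    {Ω : Type*} [MeasurableSpace Ω] (μ : Measure Ω) [IsProbabilityMeasure μ]
    (A B : Ω → ℝ) (hA : Measurable A)
    (hA0 : ∀ ω, 0 ≤ A ω) (hB0 : ∀ ω, 0 ≤ B ω)
    (hBint : Integrable B μ) (hEB : ∫ ω, B ω ∂μ ≤ 1)
    (hind : IndepFun A B μ) :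
    ∫ ω, min 1 (A ω * B ω) ∂μ ≤ ∫ ω, min 1 (A ω) ∂μ := by
  set s : ℝ → ℝ := (Set.Iic 1).indicator id
  have hs : Measurable s := measurable_id.indicator measurableSet_Iic
  have hsA_mem : ∀ ω, s (A ω) ∈ Set.Icc 0 1 := fun ω => indicator_Iic_one_id_mem_Icc (hA0 ω)
  have hsA : AEStronglyMeasurable (fun ω => s (A ω)) μ := (hs.comp hA).aestronglyMeasurable
  have hint_A := integrable_min_one_of_nonneg (μ := μ) hA.aemeasurable hA0
  have hint_err : Integrable (fun ω => s (A ω) * (B ω - 1)) μ :=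
    (hBint.sub (integrable_const 1)).bdd_mul hsA (.of_forall fun ω => by
      rw [Real.norm_of_nonneg (hsA_mem ω).1]; exact (hsA_mem ω).2)
  calc ∫ ω, min 1 (A ω * B ω) ∂μ
      ≤ ∫ ω, (min 1 (A ω) + s (A ω) * (B ω - 1)) ∂μ :=
        integral_mono (integrable_min_one_of_nonneg (hA.aemeasurable.mul hBint.aemeasurable)
          fun ω => mul_nonneg (hA0 ω) (hB0 ω)) (hint_A.add hint_err)
          fun ω => min_one_mul_le_add_indicator_mul_sub_one (A ω) (B ω)
    _ = ∫ ω, min 1 (A ω) ∂μ + ∫ ω, s (A ω) * (B ω - 1) ∂μ := integral_add hint_A hint_err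
    _ ≤ ∫ ω, min 1 (A ω) ∂μ := add_le_of_nonpos_right <|
        integral_mul_sub_one_nonpos_of_indepFun (hind.comp hs measurable_id) hsA
          (fun ω => (hsA_mem ω).1) hBint hEB

/-- For independent nonnegative random variables `A`, `B` with `B` integrable and
`E[B] ≤ 1`, one has `E[min(1, A*B)] ≤ E[min(1, A)]`. -/
theorem expectation_min_one_mul_le_of_expectation_le_one
    {Ω : Type*} [MeasurableSpace Ω] (μ : Measure Ω) [IsProbabilityMeasure μ]
    (A B : Ω → ℝ) (hA : Measurable A) (hB : Measurable B)
    (hA0 : ∀ ω, 0 ≤ A ω) (hB0 : ∀ ω, 0 ≤ B ω)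
    (hBint : Integrable B μ) (hEB : ∫ ω, B ω ∂μ ≤ 1)
    (hind : IndepFun A B μ) :
    ∫ ω, min 1 (A ω * B ω) ∂μ ≤ ∫ ω, min 1 (A ω) ∂μ :=
  expectation_min_one_mul_le_of_expectation_le_one_general μ A B hA hA0 hB0 hBint hEB hind
end

section
/- Let γ > 0 and let Φ denote the standard normal cumulative distribution function, Φ(z) = ∫_{−∞}^{z} (2π)^{−1/2} exp(−t²/2) dt. Let μ be a probability measure on ℝ² whose cumulative distribution function on the positive quadrant is the bivariate Hüsler–Reiss distribution: for all x > 0, y > 0, μ((−∞, x] × (−∞, y]) = exp(−(1/x)·Φ(√γ/2 + (1/√γ)·log(y/x)) − (1/y)·Φ(√γ/2 + (1/√γ)·log(x/y))), and μ puts no mass outside (0,∞)². Then lim_{t→∞} t · μ((t, ∞) × (t, ∞)) = 2·(1 − Φ(√γ/2)). -/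
/-!
Both margins of `μ` are unit Fréchet, as one sees by letting one argument of the distribution
function tend to infinity, and on the diagonal the distribution function is
`exp (-2 Φ(√γ/2) / t)`. Inclusion–exclusion then gives `t μ((t,∞)²) = t g(1/t)` with
`g s = 1 - 2 exp (-s) + exp (-2 Φ(√γ/2) s)`; since `g 0 = 0`, this tends to `g'(0) = 2 - 2 Φ(√γ/2)`.
-/

open MeasureTheory Filter

/-- The standard normal cumulative distribution function. -/
noncomputable def stdNormalCDF (z : ℝ) : ℝ :=
  ∫ t in Set.Iic z, (Real.sqrt (2 * Real.pi))⁻¹ * Real.exp (-(t ^ 2) / 2)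

open ProbabilityTheory Set Topology

lemma stdNormalCDF_eq_cdf_gaussianReal : stdNormalCDF = cdf (gaussianReal 0 1) := by
  ext z
  rw [cdf_eq_real, measureReal_def, gaussianReal_apply_eq_integral _ one_ne_zero,
    ENNReal.toReal_ofReal (integral_nonneg (gaussianPDFReal_nonneg 0 1))]
  simp [stdNormalCDF, gaussianPDFReal]

lemma stdNormalCDF_nonneg (z : ℝ) : 0 ≤ stdNormalCDF z :=
  stdNormalCDF_eq_cdf_gaussianReal ▸ cdf_nonneg _ z

lemma stdNormalCDF_le_one (z : ℝ) : stdNormalCDF z ≤ 1 :=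
  stdNormalCDF_eq_cdf_gaussianReal ▸ cdf_le_one _ z

lemma tendsto_stdNormalCDF_atTop : Tendsto stdNormalCDF atTop (𝓝 1) :=
  stdNormalCDF_eq_cdf_gaussianReal ▸ tendsto_cdf_atTop _

lemma HasDerivAt.tendsto_mul_inv_atTop {f : ℝ → ℝ} {f' : ℝ} (hf : HasDerivAt f f' 0)
    (hf0 : f 0 = 0) : Tendsto (fun t => t * f t⁻¹) atTop (𝓝 f') := by
  refine (hf.tendsto_slope_zero_right.comp tendsto_inv_atTop_nhdsGT_zero).congr fun t => ?_
  simp [hf0]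

section ProdCDF

variable {α β : Type*} [MeasurableSpace α] [MeasurableSpace β] (μ : Measure (α × β))

lemma tendsto_measureReal_prod_Iic_atTop [IsFiniteMeasure μ] [Preorder β]
    [IsCountablyGenerated (atTop : Filter β)] (s : Set α) :
    Tendsto (fun y => μ.real (s ×ˢ Iic y)) atTop (𝓝 (μ.real (s ×ˢ univ))) := by
  have h := tendsto_measure_iUnion_atTop (μ := μ)
    (fun a b hab => prod_mono le_rfl (Iic_subset_Iic.2 hab) : Monotone fun y : β => s ×ˢ Iic y)
  rw [← prod_iUnion, iUnion_Iic] at h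
  exact (ENNReal.tendsto_toReal (measure_ne_top _ _)).comp h

lemma tendsto_measureReal_Iic_prod_atTop [IsFiniteMeasure μ] [Preorder α]
    [IsCountablyGenerated (atTop : Filter α)] (t : Set β) :
    Tendsto (fun x => μ.real (Iic x ×ˢ t)) atTop (𝓝 (μ.real (univ ×ˢ t))) := by
  have h := tendsto_measure_iUnion_atTop (μ := μ)
    (fun a b hab => prod_mono (Iic_subset_Iic.2 hab) le_rfl : Monotone fun x : α => Iic x ×ˢ t)
  rw [← iUnion_prod_const, iUnion_Iic] at h
  exact (ENNReal.tendsto_toReal (measure_ne_top _ _)).comp h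

lemma measureReal_compl_prod_compl [IsProbabilityMeasure μ] {s : Set α} {t : Set β}
    (hs : MeasurableSet s) (ht : MeasurableSet t) :
    μ.real (sᶜ ×ˢ tᶜ) = 1 - μ.real (s ×ˢ univ) - μ.real (univ ×ˢ t) + μ.real (s ×ˢ t) := by
  have hA : MeasurableSet (s ×ˢ (univ : Set β)) := hs.prod .univ
  have hB : MeasurableSet ((univ : Set α) ×ˢ t) := MeasurableSet.univ.prod ht
  have hunion := measureReal_union_add_inter (μ := μ) (s := s ×ˢ univ) hB
  rw [prod_inter_prod, inter_univ, univ_inter] at hunion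
  rw [← compl_compl (sᶜ ×ˢ tᶜ), compl_prod_eq_union, compl_compl, compl_compl,
    probReal_compl_eq_one_sub (hA.union hB)]
  linarith

end ProdCDF

noncomputable def huslerReissCDF (γ x y : ℝ) : ℝ :=
  Real.exp (-(1 / x) * stdNormalCDF (Real.sqrt γ / 2 + (1 / Real.sqrt γ) * Real.log (y / x))
    - (1 / y) * stdNormalCDF (Real.sqrt γ / 2 + (1 / Real.sqrt γ) * Real.log (x / y)))

lemma huslerReissCDF_comm (γ x y : ℝ) : huslerReissCDF γ x y = huslerReissCDF γ y x := by
  simp only [huslerReissCDF]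
  ring_nf

lemma huslerReissCDF_self (γ t : ℝ) :
    huslerReissCDF γ t t = Real.exp (-(2 * stdNormalCDF (Real.sqrt γ / 2)) * t⁻¹) := by
  have hlog : Real.log (t / t) = 0 := by
    rcases eq_or_ne t 0 with rfl | ht
    · simp
    · simp [ht]
  rw [huslerReissCDF, hlog, mul_zero, add_zero]
  ring_nf

lemma tendsto_huslerReissCDF_atTop {γ x : ℝ} (hγ : 0 < γ) (hx : 0 < x) :
    Tendsto (huslerReissCDF γ x) atTop (𝓝 (Real.exp (-x⁻¹))) := by
  have hΦ : Tendsto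
      (fun y => stdNormalCDF (Real.sqrt γ / 2 + (1 / Real.sqrt γ) * Real.log (y / x)))
      atTop (𝓝 1) := by
    refine tendsto_stdNormalCDF_atTop.comp (tendsto_atTop_add_const_left _ _ ?_)
    exact (Real.tendsto_log_atTop.comp (tendsto_id.atTop_div_const hx)).const_mul_atTop
      (by positivity)
  have hsmall : Tendsto
      (fun y => (1 / y) * stdNormalCDF (Real.sqrt γ / 2 + (1 / Real.sqrt γ) * Real.log (x / y)))
      atTop (𝓝 0) := by
    refine squeeze_zero' ?_ ?_ ((tendsto_const_nhds (x := (1 : ℝ))).div_atTop tendsto_id)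
    · filter_upwards [eventually_gt_atTop 0] with y hy
      exact mul_nonneg (by positivity) (stdNormalCDF_nonneg _)
    · filter_upwards [eventually_gt_atTop 0] with y hy
      exact mul_le_of_le_one_right (by positivity) (stdNormalCDF_le_one _)
  rw [show -x⁻¹ = -(1 / x) * 1 - 0 by ring]
  exact (Real.continuous_exp.tendsto _).comp ((hΦ.const_mul (-(1 / x))).sub hsmall)

theorem huslerReiss_tail_dependence_general
    (γ : ℝ) (hγ : 0 < γ) (μ : Measure (ℝ × ℝ)) [IsProbabilityMeasure μ]
    (hcdf : ∀ x y : ℝ, 0 < x → 0 < y →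
      μ (Set.Iic x ×ˢ Set.Iic y) = ENNReal.ofReal (Real.exp
        (-(1 / x) * stdNormalCDF (Real.sqrt γ / 2 + (1 / Real.sqrt γ) * Real.log (y / x))
          - (1 / y) * stdNormalCDF (Real.sqrt γ / 2 + (1 / Real.sqrt γ) * Real.log (x / y))))) :
    Tendsto (fun t : ℝ => t * (μ (Set.Ioi t ×ˢ Set.Ioi t)).toReal)
      atTop (nhds (2 * (1 - stdNormalCDF (Real.sqrt γ / 2)))) := by
  set c := stdNormalCDF (Real.sqrt γ / 2)
  have hF : ∀ x y, 0 < x → 0 < y → μ.real (Iic x ×ˢ Iic y) = huslerReissCDF γ x y :=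
    fun x y hx hy => by
      rw [measureReal_def, hcdf x y hx hy, ENNReal.toReal_ofReal (Real.exp_pos _).le]; rfl
  have hmarg₁ : ∀ x, 0 < x → μ.real (Iic x ×ˢ univ) = Real.exp (-x⁻¹) := fun x hx =>
    tendsto_nhds_unique (tendsto_measureReal_prod_Iic_atTop μ _) <|
      (tendsto_huslerReissCDF_atTop hγ hx).congr' <|
        (eventually_gt_atTop 0).mono fun y hy => (hF x y hx hy).symm
  have hmarg₂ : ∀ y, 0 < y → μ.real (univ ×ˢ Iic y) = Real.exp (-y⁻¹) := fun y hy =>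
    tendsto_nhds_unique (tendsto_measureReal_Iic_prod_atTop μ _) <|
      (tendsto_huslerReissCDF_atTop hγ hy).congr' <|
        (eventually_gt_atTop 0).mono fun x hx =>
          ((hF x y hx hy).trans (huslerReissCDF_comm γ x y)).symm
  have hg : HasDerivAt (fun s => 1 - 2 * Real.exp (-s) + Real.exp (-(2 * c) * s))
      (2 * (1 - c)) 0 := by
    refine ((((hasDerivAt_neg (0 : ℝ)).exp.const_mul 2).const_sub 1).add
      ((hasDerivAt_id (0 : ℝ)).const_mul (-(2 * c))).exp).congr_deriv ?_
    simp only [neg_zero, Real.exp_zero, id, mul_zero]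
    ring
  refine (hg.tendsto_mul_inv_atTop (by norm_num)).congr' ?_
  filter_upwards [eventually_gt_atTop 0] with t ht
  rw [← compl_Iic, ← measureReal_def,
    measureReal_compl_prod_compl μ measurableSet_Iic measurableSet_Iic, hmarg₁ t ht, hmarg₂ t ht,
    hF t t ht ht, huslerReissCDF_self]
  ring

/-- The bivariate Hüsler–Reiss distribution with dependence parameter `γ > 0` has
upper tail dependence coefficient `λ = 2 (1 - Φ(√γ / 2))`. -/
theorem huslerReiss_tail_dependence
    (γ : ℝ) (hγ : 0 < γ) (μ : Measure (ℝ × ℝ)) [IsProbabilityMeasure μ]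
    (hcdf : ∀ x y : ℝ, 0 < x → 0 < y →
      μ (Set.Iic x ×ˢ Set.Iic y) = ENNReal.ofReal (Real.exp
        (-(1 / x) * stdNormalCDF (Real.sqrt γ / 2 + (1 / Real.sqrt γ) * Real.log (y / x))
          - (1 / y) * stdNormalCDF (Real.sqrt γ / 2 + (1 / Real.sqrt γ) * Real.log (x / y)))))
    (hsupp : μ {p : ℝ × ℝ | ¬ (0 < p.1 ∧ 0 < p.2)} = 0) :
    Tendsto (fun t : ℝ => t * (μ (Set.Ioi t ×ˢ Set.Ioi t)).toReal)
      atTop (nhds (2 * (1 - stdNormalCDF (Real.sqrt γ / 2)))) :=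
  huslerReiss_tail_dependence_general γ hγ μ hcdf
end
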